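/- arXiv:2406.04112 — 3 statements merged into one kernel-verified Lean document; each statement's English description precedes it below -/
import Mathlib

section
/- Let W_l(t) follow scaled-orthogonal initialization and the gradient-descent updates described in the context, with rank(Φ) ≤ r and m := d − 2r > 0. Then there exist vectors u_i^{(l)}, v_i^{(l)} ∈ ℝ^d for l ∈ {1,…,L} and i ∈ {1,…,m} such that for each l the families {u_i^{(l)}}_{i=1}^m and {v_i^{(l)}}_{i=1}^m are orthonormal, v_i^{(l+1)} = u_i^{(l)} for all l ∈ {1,…,L−1} and i ∈ {1,…,m}, and for every t ≥ 0, every l ∈ {1,…,L} and every i ∈ {1,…,m}: (A) W_l(t)·v_i^{(l)} = ρ_l(t)·u_i^{(l)}; (B) W_l(t)ᵀ·u_i^{(l)} = ρ_l(t)·v_i^{(l)}; (C) Φᵀ·W_{L:l+1}(t)·u_i^{(l)} = 0; and (D) Φ·W_{l−1:1}(t)ᵀ·v_i^{(l)} = 0. -/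
/-! The invariant vectors are fixed at initialization and never move. Each `W_l(0)` is `ε_l`
times an orthogonal matrix, so `x_l := (ε_1 ⋯ ε_l)⁻¹ W_{l:1}(0) y` preserves orthonormality and
`(x_{l-1}, x_l)` is a singular-vector pair of `W_l(0)` with singular value `ε_l`. Taking the `m`
orthonormal vectors `y` in `ker Φ ∩ ker (Φᵀ W_{L:1}(0))`, of dimension at least `d - 2r`, gives
`Φ x_0 = 0` and `Φᵀ x_L = 0`. Hence `Φ` drops out of the gradient of layer `l` applied to
`x_{l-1}` (or, transposed, to `x_l`), which leaves a product of current singular values times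
`x_l` (resp. `x_{l-1}`): one gradient step turns the chain `x` with singular values `ρ(t)` into
the same chain with singular values `ρ(t+1)`. -/

open Matrix BigOperators Filter

noncomputable section

/-- Auxiliary: product of `k` consecutive matrices ending (on the right) at index `i`. -/
def chainAux {n : Type*} [Fintype n] [DecidableEq n]
    (W : ℕ → Matrix n n ℝ) (i : ℕ) : ℕ → Matrix n n ℝ
  | 0 => 1
  | (k+1) => W (i + k) * chainAux W i k

/-- `chain W i j = W j * W (j-1) * ⋯ * W i`; equals `1` when `j < i` (empty product). -/
def chain {n : Type*} [Fintype n] [DecidableEq n]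
    (W : ℕ → Matrix n n ℝ) (i j : ℕ) : Matrix n n ℝ :=
  chainAux W i (j + 1 - i)

/-- `blockDiag r m A B` is the `(2r+m)×(2r+m)` block-diagonal matrix `diag(A, B)`
with top-left block `A` (of size `2r×2r`) and bottom-right block `B` (of size `m×m`). -/
def blockDiag (r m : ℕ) (A : Matrix (Fin (2*r)) (Fin (2*r)) ℝ)
    (B : Matrix (Fin m) (Fin m) ℝ) : Matrix (Fin (2*r + m)) (Fin (2*r + m)) ℝ :=
  Matrix.reindex finSumFinEquiv finSumFinEquiv (Matrix.fromBlocks A 0 0 B)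

/-- The `d×2r` matrix formed by the first `2r` columns of a `(2r+m)×(2r+m)` matrix. -/
def cols1 (r m : ℕ) (U : Matrix (Fin (2*r + m)) (Fin (2*r + m)) ℝ) :
    Matrix (Fin (2*r + m)) (Fin (2*r)) ℝ :=
  fun i j => U i (Fin.castAdd m j)

/-- The `d×m` matrix formed by the last `m` columns of a `(2r+m)×(2r+m)` matrix. -/
def cols2 (r m : ℕ) (U : Matrix (Fin (2*r + m)) (Fin (2*r + m)) ℝ) :
    Matrix (Fin (2*r + m)) (Fin m) ℝ :=
  fun i j => U i (Fin.natAdd (2*r) j)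

/-- Squared Frobenius norm: `‖A‖_F² = trace(AᵀA)`. -/
def frobSq {p q : Type*} [Fintype p] [Fintype q] (A : Matrix p q ℝ) : ℝ :=
  Matrix.trace (Aᵀ * A)

/-- Frobenius norm: `‖A‖_F = √(trace(AᵀA))`. -/
def frobNorm {p q : Type*} [Fintype p] [Fintype q] (A : Matrix p q ℝ) : ℝ :=
  Real.sqrt (Matrix.trace (Aᵀ * A))

section Chain

variable {n : Type*} [Fintype n] [DecidableEq n]

theorem chain_self (W : ℕ → Matrix n n ℝ) (i : ℕ) : chain W (i + 1) i = 1 := by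
  simp [chain, chainAux]

theorem chain_succ (W : ℕ → Matrix n n ℝ) {i j : ℕ} (h : i ≤ j + 1) :
    chain W i (j + 1) = W (j + 1) * chain W i j := by
  rw [chain, chain, show j + 1 + 1 - i = (j + 1 - i) + 1 by omega, chainAux,
    show i + (j + 1 - i) = j + 1 by omega]

theorem transpose_mul_self_chain {W : ℕ → Matrix n n ℝ} {e : ℕ → ℝ} {l : ℕ}
    (hW : ∀ k, 1 ≤ k → k ≤ l → (W k)ᵀ * W k = e k ^ 2 • 1) :
    (chain W 1 l)ᵀ * chain W 1 l = (∏ k ∈ Finset.Ioc 0 l, e k) ^ 2 • 1 := by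
  induction l with
  | zero => simp [chain, chainAux]
  | succ l ih =>
    rw [chain_succ W (by omega), Matrix.transpose_mul, Matrix.mul_assoc,
      ← Matrix.mul_assoc (W (l + 1))ᵀ, hW (l + 1) (by omega) le_rfl, Matrix.smul_mul,
      Matrix.one_mul, Matrix.mul_smul, ih fun k hk hkl => hW k hk (by omega),
      Finset.prod_Ioc_succ_top (by omega), smul_smul, mul_pow, mul_comm]

end Chain

theorem mul_prod_erase_sq {M : Type*} [CommMonoid M] (f : ℕ → M) {l L : ℕ} (hl : l < L) :
    f (l + 1) * ∏ k ∈ (Finset.Icc 1 L).erase (l + 1), f k ^ 2 =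
      (∏ k ∈ Finset.Ioc 0 l, f k) * (∏ k ∈ Finset.Ioc 0 L, f k) *
        ∏ k ∈ Finset.Ioc (l + 1) L, f k := by
  have hsplit : (Finset.Icc 1 L).erase (l + 1) = Finset.Ioc 0 l ∪ Finset.Ioc (l + 1) L := by
    ext k; simp only [Finset.mem_erase, Finset.mem_Icc, Finset.mem_union, Finset.mem_Ioc]; omega
  have hdisj : Disjoint (Finset.Ioc 0 l) (Finset.Ioc (l + 1) L) := by
    rw [Finset.disjoint_left]; intro k; simp only [Finset.mem_Ioc]; omega
  rw [hsplit, Finset.prod_union hdisj, ← Finset.prod_Ioc_consecutive f (Nat.zero_le (l + 1)) hl,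
    Finset.prod_Ioc_succ_top (Nat.zero_le l), Finset.prod_pow, Finset.prod_pow, sq, sq]
  ac_rfl

section SingularChain

variable {n : Type*} [Fintype n] [DecidableEq n]

def IsSingularChain (W : ℕ → Matrix n n ℝ) (σ : ℕ → ℝ) (x : ℕ → n → ℝ) (L : ℕ) : Prop :=
  ∀ k < L, W (k + 1) *ᵥ x k = σ (k + 1) • x (k + 1) ∧
    (W (k + 1))ᵀ *ᵥ x (k + 1) = σ (k + 1) • x k

namespace IsSingularChain

variable {W : ℕ → Matrix n n ℝ} {σ : ℕ → ℝ} {x : ℕ → n → ℝ} {L : ℕ}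

theorem chain_mulVec (h : IsSingularChain W σ x L) {a b : ℕ} (hab : a ≤ b) (hb : b ≤ L) :
    chain W (a + 1) b *ᵥ x a = (∏ k ∈ Finset.Ioc a b, σ k) • x b := by
  induction b, hab using Nat.le_induction with
  | base => simp [chain_self]
  | succ b hab ih =>
    rw [chain_succ W (by omega), ← Matrix.mulVec_mulVec, ih (by omega), Matrix.mulVec_smul,
      (h b (by omega)).1, Finset.prod_Ioc_succ_top hab, smul_smul]

theorem transpose_chain_mulVec (h : IsSingularChain W σ x L) {a b : ℕ} (hab : a ≤ b)
    (hb : b ≤ L) : (chain W (a + 1) b)ᵀ *ᵥ x b = (∏ k ∈ Finset.Ioc a b, σ k) • x a := by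
  induction b, hab using Nat.le_induction with
  | base => simp [chain_self]
  | succ b hab ih =>
    rw [chain_succ W (by omega), Matrix.transpose_mul, ← Matrix.mulVec_mulVec,
      (h b (by omega)).2, Matrix.mulVec_smul, ih (by omega), Finset.prod_Ioc_succ_top hab,
      smul_smul, mul_comm]

theorem gradientStep (h : IsSingularChain W σ x L) {Φ : Matrix n n ℝ} (hx₀ : Φ *ᵥ x 0 = 0)
    (hx_L : Φᵀ *ᵥ x L = 0) {W' : ℕ → Matrix n n ℝ} {σ' : ℕ → ℝ} {α η : ℝ}
    (hW' : ∀ l, 1 ≤ l → l ≤ L → W' l = α • W l -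
      η • ((chain W (l + 1) L)ᵀ * (chain W 1 L - Φ) * (chain W 1 (l - 1))ᵀ))
    (hσ' : ∀ l, σ' l = σ l * (α - η * ∏ k ∈ (Finset.Icc 1 L).erase l, σ k ^ 2)) :
    IsSingularChain W' σ' x L := by
  intro k hk
  have hσ'k : σ' (k + 1) = α * σ (k + 1) - η * ((∏ j ∈ Finset.Ioc 0 k, σ j) *
      (∏ j ∈ Finset.Ioc 0 L, σ j) * ∏ j ∈ Finset.Ioc (k + 1) L, σ j) := by
    rw [hσ', ← mul_prod_erase_sq σ hk]; ring
  rw [hW' (k + 1) (by omega) hk, Nat.add_sub_cancel, hσ'k]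
  constructor
  · rw [Matrix.sub_mulVec, Matrix.smul_mulVec, Matrix.smul_mulVec, (h k hk).1,
      ← Matrix.mulVec_mulVec, ← Matrix.mulVec_mulVec,
      h.transpose_chain_mulVec (Nat.zero_le k) hk.le, Matrix.mulVec_smul, Matrix.sub_mulVec,
      hx₀, sub_zero, h.chain_mulVec (Nat.zero_le L) le_rfl, Matrix.mulVec_smul,
      Matrix.mulVec_smul, h.transpose_chain_mulVec hk le_rfl]
    module
  · rw [Matrix.transpose_sub, Matrix.transpose_smul, Matrix.transpose_smul,
      Matrix.transpose_mul, Matrix.transpose_mul, Matrix.transpose_transpose,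
      Matrix.transpose_transpose, Matrix.sub_mulVec, Matrix.smul_mulVec, Matrix.smul_mulVec,
      (h k hk).2, ← Matrix.mulVec_mulVec, ← Matrix.mulVec_mulVec, h.chain_mulVec hk le_rfl,
      Matrix.mulVec_smul, Matrix.transpose_sub, Matrix.sub_mulVec, hx_L, sub_zero,
      h.transpose_chain_mulVec (Nat.zero_le L) le_rfl, Matrix.mulVec_smul, Matrix.mulVec_smul,
      h.chain_mulVec (Nat.zero_le k) hk.le]
    module

end IsSingularChain

end SingularChain

section NormalizedChain

variable {n : Type*} [Fintype n] [DecidableEq n] {W : ℕ → Matrix n n ℝ} {e : ℕ → ℝ}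

def normalizedChain (W : ℕ → Matrix n n ℝ) (e : ℕ → ℝ) (y : n → ℝ) (l : ℕ) : n → ℝ :=
  (∏ k ∈ Finset.Ioc 0 l, e k)⁻¹ • chain W 1 l *ᵥ y

theorem normalizedChain_zero (y : n → ℝ) : normalizedChain W e y 0 = y := by
  simp [normalizedChain, chain, chainAux]

theorem prod_Ioc_zero_ne_zero {l : ℕ} (he : ∀ k, 1 ≤ k → k ≤ l → e k ≠ 0) :
    ∏ k ∈ Finset.Ioc 0 l, e k ≠ 0 :=
  Finset.prod_ne_zero_iff.2 fun k hk => he k (Finset.mem_Ioc.1 hk).1 (Finset.mem_Ioc.1 hk).2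

theorem dotProduct_mulVec_of_transpose_mul_self {M : Matrix n n ℝ} {c : ℝ}
    (hM : Mᵀ * M = c • 1) (y z : n → ℝ) : (M *ᵥ y) ⬝ᵥ (M *ᵥ z) = c * (y ⬝ᵥ z) := by
  rw [Matrix.dotProduct_mulVec, Matrix.vecMul_mulVec, ← Matrix.dotProduct_mulVec, hM,
    Matrix.smul_mulVec, Matrix.one_mulVec, dotProduct_smul, smul_eq_mul]

theorem dotProduct_normalizedChain {l : ℕ} (hW : ∀ k, 1 ≤ k → k ≤ l → (W k)ᵀ * W k = e k ^ 2 • 1)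
    (he : ∀ k, 1 ≤ k → k ≤ l → e k ≠ 0) (y z : n → ℝ) :
    normalizedChain W e y l ⬝ᵥ normalizedChain W e z l = y ⬝ᵥ z := by
  have hc := prod_Ioc_zero_ne_zero he
  rw [normalizedChain, normalizedChain, smul_dotProduct, dotProduct_smul,
    dotProduct_mulVec_of_transpose_mul_self (transpose_mul_self_chain hW), smul_eq_mul,
    smul_eq_mul]
  field_simp

theorem isSingularChain_normalizedChain {L : ℕ}
    (hW : ∀ k, 1 ≤ k → k ≤ L → (W k)ᵀ * W k = e k ^ 2 • 1)
    (he : ∀ k, 1 ≤ k → k ≤ L → e k ≠ 0) (y : n → ℝ) :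
    IsSingularChain W e (normalizedChain W e y) L := by
  intro k hk
  have hc := prod_Ioc_zero_ne_zero (l := k) fun j hj hjk => he j hj (by omega)
  have he' := he (k + 1) (by omega) hk
  simp only [normalizedChain, Finset.prod_Ioc_succ_top (Nat.zero_le k), chain_succ W
    (Nat.le_add_left 1 k), Matrix.mulVec_smul, ← Matrix.mulVec_mulVec,
    Matrix.mulVec_mulVec _ (W (k + 1))ᵀ, hW (k + 1) (by omega) hk, Matrix.smul_mulVec,
    Matrix.one_mulVec, smul_smul]
  constructor <;> congr 1 <;> field_simp

end NormalizedChain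

section Orthonormal

variable {n : Type*} [Fintype n]

theorem exists_orthonormal_dotProduct_of_le_finrank (K : Submodule ℝ (n → ℝ)) {m : ℕ}
    (hm : m ≤ Module.finrank ℝ K) :
    ∃ v : Fin m → n → ℝ, (∀ i, v i ∈ K) ∧ ∀ i j, v i ⬝ᵥ v j = if i = j then 1 else 0 := by
  let e := (WithLp.linearEquiv 2 ℝ (n → ℝ)).symm
  let b := stdOrthonormalBasis ℝ (K.map (e : (n → ℝ) →ₗ[ℝ] EuclideanSpace ℝ n))
  have hm' : m ≤ Module.finrank ℝ (K.map (e : (n → ℝ) →ₗ[ℝ] EuclideanSpace ℝ n)) :=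
    (LinearEquiv.finrank_map_eq e K).symm ▸ hm
  refine ⟨fun i => WithLp.ofLp (b (Fin.castLE hm' i) : EuclideanSpace ℝ n), fun i => ?_,
    fun i j => ?_⟩
  · obtain ⟨y, hy, hy_eq⟩ := Submodule.mem_map.1 (b (Fin.castLE hm' i)).2
    simp only [← hy_eq]
    exact hy
  · have h := orthonormal_iff_ite.1 b.orthonormal (Fin.castLE hm' j) (Fin.castLE hm' i)
    rw [Submodule.coe_inner, EuclideanSpace.inner_eq_star_dotProduct] at h
    simpa [Fin.castLE_inj, eq_comm] using h

theorem card_le_rank_add_rank_add_finrank_inf_ker {p q : Type*} [Fintype p] [Fintype q]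
    (A : Matrix p n ℝ) (B : Matrix q n ℝ) :
    Fintype.card n ≤ A.rank + B.rank +
      Module.finrank ℝ ↥(LinearMap.ker A.mulVecLin ⊓ LinearMap.ker B.mulVecLin) := by
  have hA := LinearMap.finrank_range_add_finrank_ker A.mulVecLin
  have hB := LinearMap.finrank_range_add_finrank_ker B.mulVecLin
  have hsup := Submodule.finrank_sup_add_finrank_inf_eq
    (LinearMap.ker A.mulVecLin) (LinearMap.ker B.mulVecLin)
  have hle := Submodule.finrank_le (LinearMap.ker A.mulVecLin ⊔ LinearMap.ker B.mulVecLin)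
  rw [Module.finrank_fintype_fun_eq_card] at hA hB hle
  rw [Matrix.rank, Matrix.rank]
  omega

theorem exists_orthonormal_mulVec_eq_zero {p q : Type*} [Fintype p] [Fintype q]
    (A : Matrix p n ℝ) (B : Matrix q n ℝ) {m : ℕ} (hm : A.rank + B.rank + m ≤ Fintype.card n) :
    ∃ v : Fin m → n → ℝ, (∀ i j, v i ⬝ᵥ v j = if i = j then 1 else 0) ∧
      ∀ i, A *ᵥ v i = 0 ∧ B *ᵥ v i = 0 := by
  obtain ⟨v, hvK, hv⟩ := exists_orthonormal_dotProduct_of_le_finrank (m := m)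
    (LinearMap.ker A.mulVecLin ⊓ LinearMap.ker B.mulVecLin)
    (by have := card_le_rank_add_rank_add_finrank_inf_ker A B; omega)
  exact ⟨v, hv, hvK⟩

end Orthonormal

theorem statement2_general
    (r m : ℕ) (L : ℕ)
    (Φ : Matrix (Fin (2*r + m)) (Fin (2*r + m)) ℝ) (hΦ : Φ.rank ≤ r)
    (ε : ℕ → ℝ) (hε : ∀ l, 1 ≤ l → l ≤ L → 0 < ε l)
    (η lam : ℝ)
    (W : ℕ → ℕ → Matrix (Fin (2*r + m)) (Fin (2*r + m)) ℝ)
    (hW0 : ∀ l, 1 ≤ l → l ≤ L →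
      W 0 l * (W 0 l)ᵀ = (ε l)^2 • (1 : Matrix (Fin (2*r + m)) (Fin (2*r + m)) ℝ) ∧
      (W 0 l)ᵀ * W 0 l = (ε l)^2 • (1 : Matrix (Fin (2*r + m)) (Fin (2*r + m)) ℝ))
    (hWupd : ∀ t l, 1 ≤ l → l ≤ L →
      W (t+1) l = (1 - η * lam) • W t l
        - η • ((chain (W t) (l+1) L)ᵀ * (chain (W t) 1 L - Φ) * (chain (W t) 1 (l-1))ᵀ))
    (ρ : ℕ → ℕ → ℝ)
    (hρ0 : ∀ l, ρ 0 l = ε l)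
    (hρ : ∀ t l, ρ (t+1) l
      = ρ t l * (1 - η * lam - η * ∏ k ∈ (Finset.Icc 1 L).erase l, (ρ t k)^2)) :
    ∃ u v : ℕ → Fin m → (Fin (2*r + m) → ℝ),
      (∀ l, 1 ≤ l → l ≤ L →
        (∀ i j, u l i ⬝ᵥ u l j = if i = j then (1:ℝ) else 0) ∧
        (∀ i j, v l i ⬝ᵥ v l j = if i = j then (1:ℝ) else 0)) ∧
      (∀ l, 1 ≤ l → l + 1 ≤ L → ∀ i, v (l+1) i = u l i) ∧
      (∀ t : ℕ, ∀ l, 1 ≤ l → l ≤ L → ∀ i,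
        (W t l) *ᵥ (v l i) = ρ t l • u l i ∧
        (W t l)ᵀ *ᵥ (u l i) = ρ t l • v l i ∧
        Φᵀ *ᵥ ((chain (W t) (l+1) L) *ᵥ (u l i)) = 0 ∧
        Φ *ᵥ ((chain (W t) 1 (l-1))ᵀ *ᵥ (v l i)) = 0) := by
  have hε₀ : ∀ l, 1 ≤ l → l ≤ L → ε l ≠ 0 := fun l hl hlL => (hε l hl hlL).ne'
  have hW₀ : ∀ l, 1 ≤ l → l ≤ L → (W 0 l)ᵀ * W 0 l = ε l ^ 2 • 1 :=
    fun l hl hlL => (hW0 l hl hlL).2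
  have hrank : (Φᵀ * chain (W 0) 1 L).rank ≤ r :=
    (Matrix.rank_mul_le_left _ _).trans ((Matrix.rank_transpose Φ).trans_le hΦ)
  obtain ⟨y, hy, hΦy⟩ := exists_orthonormal_mulVec_eq_zero Φ (Φᵀ * chain (W 0) 1 L) (m := m)
    (by rw [Fintype.card_fin]; omega)
  set x := fun i => normalizedChain (W 0) ε (y i)
  have hx₀ : ∀ i, Φ *ᵥ x i 0 = 0 := fun i => by simp [x, normalizedChain_zero, hΦy]
  have hx_L : ∀ i, Φᵀ *ᵥ x i L = 0 := fun i => by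
    simp only [x, normalizedChain, Matrix.mulVec_smul, Matrix.mulVec_mulVec, (hΦy i).2, smul_zero]
  have hsing : ∀ t i, IsSingularChain (W t) (ρ t) (x i) L := by
    intro t i
    induction t with
    | zero => exact funext hρ0 ▸ isSingularChain_normalizedChain hW₀ hε₀ (y i)
    | succ t ih => exact ih.gradientStep (hx₀ i) (hx_L i) (hWupd t) (hρ t)
  have horth : ∀ l ≤ L, ∀ i j, x i l ⬝ᵥ x j l = if i = j then 1 else 0 := fun l hlL i j => by
    rw [dotProduct_normalizedChain (fun k hk hkl => hW₀ k hk (hkl.trans hlL))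
      (fun k hk hkl => hε₀ k hk (hkl.trans hlL)), hy]
  refine ⟨fun l i => x i l, fun l i => x i (l - 1),
    fun l _ hlL => ⟨horth l hlL, horth (l - 1) (by omega)⟩, fun l _ _ i => rfl, ?_⟩
  intro t l hl hlL i
  obtain ⟨k, rfl⟩ : ∃ k, l = k + 1 := ⟨l - 1, by omega⟩
  simp only [Nat.add_sub_cancel]
  refine ⟨(hsing t i k hlL).1, (hsing t i k hlL).2, ?_, ?_⟩
  · rw [(hsing t i).chain_mulVec hlL le_rfl, Matrix.mulVec_smul, hx_L, smul_zero]
  · rw [(hsing t i).transpose_chain_mulVec (Nat.zero_le k) (by omega), Matrix.mulVec_smul,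
      hx₀, smul_zero]

/-- Lemma 1: existence of orthonormal families of singular vector
pairs `(u_i⁽ˡ⁾, v_i⁽ˡ⁾)` invariant throughout gradient descent, satisfying
properties (A), (B), (C), (D) at every iteration `t`. -/
theorem statement2
    (r m : ℕ) (hm : 0 < m) (L : ℕ) (hL : 1 ≤ L)
    (Φ : Matrix (Fin (2*r + m)) (Fin (2*r + m)) ℝ) (hΦ : Φ.rank ≤ r)
    (ε : ℕ → ℝ) (hε : ∀ l, 1 ≤ l → l ≤ L → 0 < ε l)
    (η lam : ℝ) (hη : 0 < η) (hlam : 0 ≤ lam)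
    (W : ℕ → ℕ → Matrix (Fin (2*r + m)) (Fin (2*r + m)) ℝ)
    (hW0 : ∀ l, 1 ≤ l → l ≤ L →
      W 0 l * (W 0 l)ᵀ = (ε l)^2 • (1 : Matrix (Fin (2*r + m)) (Fin (2*r + m)) ℝ) ∧
      (W 0 l)ᵀ * W 0 l = (ε l)^2 • (1 : Matrix (Fin (2*r + m)) (Fin (2*r + m)) ℝ))
    (hWupd : ∀ t l, 1 ≤ l → l ≤ L →
      W (t+1) l = (1 - η * lam) • W t l
        - η • ((chain (W t) (l+1) L)ᵀ * (chain (W t) 1 L - Φ) * (chain (W t) 1 (l-1))ᵀ))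
    (ρ : ℕ → ℕ → ℝ)
    (hρ0 : ∀ l, ρ 0 l = ε l)
    (hρ : ∀ t l, ρ (t+1) l
      = ρ t l * (1 - η * lam - η * ∏ k ∈ (Finset.Icc 1 L).erase l, (ρ t k)^2)) :
    ∃ u v : ℕ → Fin m → (Fin (2*r + m) → ℝ),
      (∀ l, 1 ≤ l → l ≤ L →
        (∀ i j, u l i ⬝ᵥ u l j = if i = j then (1:ℝ) else 0) ∧
        (∀ i j, v l i ⬝ᵥ v l j = if i = j then (1:ℝ) else 0)) ∧
      (∀ l, 1 ≤ l → l + 1 ≤ L → ∀ i, v (l+1) i = u l i) ∧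
      (∀ t : ℕ, ∀ l, 1 ≤ l → l ≤ L → ∀ i,
        (W t l) *ᵥ (v l i) = ρ t l • u l i ∧
        (W t l)ᵀ *ᵥ (u l i) = ρ t l • v l i ∧
        Φᵀ *ᵥ ((chain (W t) (l+1) L) *ᵥ (u l i)) = 0 ∧
        Φ *ᵥ ((chain (W t) 1 (l-1))ᵀ *ᵥ (v l i)) = 0) :=
  statement2_general r m L Φ hΦ ε hε η lam W hW0 hWupd ρ hρ0 hρ
end
end

section
/- Let the initial weights W_l(0) follow scaled-orthogonal initialization as in the context, and let 1 ≤ k < L. Suppose {u_i}_{i=1}^m and {v_i}_{i=1}^m are orthonormal families in ℝ^d such that for every i ∈ {1,…,m}: W_k(0)·v_i = ε_k·u_i, W_k(0)ᵀ·u_i = ε_k·v_i, Φᵀ·(W_L(0)⋯W_{k+1}(0))·u_i = 0, and Φ·(W_{k−1}(0)⋯W_1(0))ᵀ·v_i = 0 (empty products equal I_d). Define v'_i := u_i and u'_i := W_{k+1}(0)·v'_i / ε_{k+1}. Then {u'_i}_{i=1}^m is orthonormal and for every i ∈ {1,…,m}: W_{k+1}(0)·v'_i = ε_{k+1}·u'_i,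 W_{k+1}(0)ᵀ·u'_i = ε_{k+1}·v'_i, Φᵀ·(W_L(0)⋯W_{k+2}(0))·u'_i = 0, and Φ·(W_k(0)⋯W_1(0))ᵀ·v'_i = 0. -/
open Matrix BigOperators Filter

noncomputable section

/-! `W (k+1) / ε (k+1)` is orthogonal, so it carries the orthonormal `u i` to orthonormal
`u' i` and its transpose undoes it. The two conditions on `Φ` only move one factor between
the chains: `W_L ⋯ W_{k+1} u_i = (W_L ⋯ W_{k+2}) (ε_{k+1} u'_i)` and
`(W_k ⋯ W_1)ᵀ u_i = (W_{k-1} ⋯ W_1)ᵀ (ε_k v_i)`. -/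

section Chain

variable {n : Type*} [Fintype n] [DecidableEq n] (W : ℕ → Matrix n n ℝ)

lemma chainAux_succ_eq_chainAux_mul (i k : ℕ) :
    chainAux W i (k + 1) = chainAux W (i + 1) k * W i := by
  induction k with
  | zero => simp [chainAux]
  | succ k ih =>
    change W (i + (k + 1)) * chainAux W i (k + 1) = W (i + 1 + k) * chainAux W (i + 1) k * W i
    rw [ih, ← mul_assoc, show i + 1 + k = i + (k + 1) by omega]

lemma chain_eq_chain_succ_mul {i j : ℕ} (h : i ≤ j) :
    chain W i j = chain W (i + 1) j * W i := by
  rw [chain, chain, show j + 1 - i = j + 1 - (i + 1) + 1 by omega, chainAux_succ_eq_chainAux_mul]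

lemma chain_succ_eq_mul_chain {i j : ℕ} (h : i ≤ j + 1) :
    chain W i (j + 1) = W (j + 1) * chain W i j := by
  rw [chain, chain, show j + 1 + 1 - i = j + 1 - i + 1 by omega]
  change W (i + (j + 1 - i)) * _ = _
  rw [show i + (j + 1 - i) = j + 1 by omega]

end Chain

section ScaledOrthogonal

variable {n : Type*} [Fintype n] [DecidableEq n]

lemma mulVec_dotProduct_mulVec_of_transpose_mul_self {R : Type*} [CommSemiring R]
    {A : Matrix n n R} {c : R} (hA : Aᵀ * A = c • 1) (x y : n → R) :
    (A *ᵥ x) ⬝ᵥ (A *ᵥ y) = c * (x ⬝ᵥ y) := by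
  rw [dotProduct_mulVec, ← vecMul_transpose, vecMul_vecMul, hA, vecMul_smul, vecMul_one,
    smul_dotProduct, smul_eq_mul]

variable {K : Type*} [Field K] {A : Matrix n n K} {c : K}

lemma inv_smul_mulVec_dotProduct_inv_smul_mulVec (hA : Aᵀ * A = c ^ 2 • 1) (hc : c ≠ 0)
    (x y : n → K) :
    (c⁻¹ • A *ᵥ x) ⬝ᵥ (c⁻¹ • A *ᵥ y) = x ⬝ᵥ y := by
  rw [smul_dotProduct, dotProduct_smul, mulVec_dotProduct_mulVec_of_transpose_mul_self hA,
    smul_eq_mul, smul_eq_mul]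
  field_simp

lemma transpose_mulVec_inv_smul_mulVec (hA : Aᵀ * A = c ^ 2 • 1) (hc : c ≠ 0) (x : n → K) :
    Aᵀ *ᵥ (c⁻¹ • A *ᵥ x) = c • x := by
  rw [mulVec_smul, mulVec_mulVec, hA, smul_mulVec, one_mulVec, smul_smul]
  congr 1
  field_simp

end ScaledOrthogonal

theorem statement6_general
    (r m : ℕ) (L : ℕ)
    (Φ : Matrix (Fin (2*r + m)) (Fin (2*r + m)) ℝ)
    (ε : ℕ → ℝ) (hε : ∀ l, 1 ≤ l → l ≤ L → 0 < ε l)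
    (W : ℕ → Matrix (Fin (2*r + m)) (Fin (2*r + m)) ℝ)
    (hW0 : ∀ l, 1 ≤ l → l ≤ L →
      W l * (W l)ᵀ = (ε l)^2 • (1 : Matrix (Fin (2*r + m)) (Fin (2*r + m)) ℝ) ∧
      (W l)ᵀ * W l = (ε l)^2 • (1 : Matrix (Fin (2*r + m)) (Fin (2*r + m)) ℝ))
    (k : ℕ) (hk1 : 1 ≤ k) (hkL : k < L)
    (u v : Fin m → (Fin (2*r + m) → ℝ))
    (hu : ∀ i j, u i ⬝ᵥ u j = if i = j then (1:ℝ) else 0)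
    (hB : ∀ i, (W k)ᵀ *ᵥ (u i) = ε k • v i)
    (hC : ∀ i, Φᵀ *ᵥ ((chain W (k+1) L) *ᵥ (u i)) = 0)
    (hD : ∀ i, Φ *ᵥ ((chain W 1 (k-1))ᵀ *ᵥ (v i)) = 0)
    (u' v' : Fin m → (Fin (2*r + m) → ℝ))
    (hv' : ∀ i, v' i = u i)
    (hu' : ∀ i, u' i = (ε (k+1))⁻¹ • ((W (k+1)) *ᵥ (v' i))) :
    (∀ i j, u' i ⬝ᵥ u' j = if i = j then (1:ℝ) else 0) ∧
    (∀ i,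
      (W (k+1)) *ᵥ (v' i) = ε (k+1) • u' i ∧
      (W (k+1))ᵀ *ᵥ (u' i) = ε (k+1) • v' i ∧
      Φᵀ *ᵥ ((chain W (k+2) L) *ᵥ (u' i)) = 0 ∧
      Φ *ᵥ ((chain W 1 k)ᵀ *ᵥ (v' i)) = 0) := by
  have hε' : ε (k + 1) ≠ 0 := (hε (k + 1) (by omega) (by omega)).ne'
  have hWtW := (hW0 (k + 1) (by omega) (by omega)).2
  have hchain : chain W 1 k = W k * chain W 1 (k - 1) := by
    simpa only [Nat.sub_add_cancel hk1] using
      chain_succ_eq_mul_chain W (i := 1) (j := k - 1) (by omega)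
  refine ⟨fun i i' => ?_, fun i => ⟨?_, ?_, ?_, ?_⟩⟩
  · rw [hu', hu', hv', hv', inv_smul_mulVec_dotProduct_inv_smul_mulVec hWtW hε', hu]
  · rw [hu', smul_smul, mul_inv_cancel₀ hε', one_smul]
  · rw [hu', hv', transpose_mulVec_inv_smul_mulVec hWtW hε']
  · rw [hu', hv', mulVec_smul, mulVec_mulVec, ← chain_eq_chain_succ_mul W (by omega),
      mulVec_smul, hC, smul_zero]
  · rw [hv', hchain, transpose_mul, ← mulVec_mulVec, hB, mulVec_smul, mulVec_smul, hD, smul_zero]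

/-- inductive step of Lemma 1 over layers, at initialization:
given orthonormal families at layer `k`, the vectors `v'_i := u_i` and
`u'_i := W_{k+1}(0)·u_i / ε_{k+1}` satisfy the corresponding properties at layer
`k+1`. Here `W l` denotes `W_l(0)` and `d = 2r + m`. -/
theorem statement6
    (r m : ℕ) (hm : 0 < m) (L : ℕ) (hL : 1 ≤ L)
    (Φ : Matrix (Fin (2*r + m)) (Fin (2*r + m)) ℝ) (hΦ : Φ.rank ≤ r)
    (ε : ℕ → ℝ) (hε : ∀ l, 1 ≤ l → l ≤ L → 0 < ε l)
    (W : ℕ → Matrix (Fin (2*r + m)) (Fin (2*r + m)) ℝ)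
    (hW0 : ∀ l, 1 ≤ l → l ≤ L →
      W l * (W l)ᵀ = (ε l)^2 • (1 : Matrix (Fin (2*r + m)) (Fin (2*r + m)) ℝ) ∧
      (W l)ᵀ * W l = (ε l)^2 • (1 : Matrix (Fin (2*r + m)) (Fin (2*r + m)) ℝ))
    (k : ℕ) (hk1 : 1 ≤ k) (hkL : k < L)
    (u v : Fin m → (Fin (2*r + m) → ℝ))
    (hu : ∀ i j, u i ⬝ᵥ u j = if i = j then (1:ℝ) else 0)
    (hv : ∀ i j, v i ⬝ᵥ v j = if i = j then (1:ℝ) else 0)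
    (hA : ∀ i, (W k) *ᵥ (v i) = ε k • u i)
    (hB : ∀ i, (W k)ᵀ *ᵥ (u i) = ε k • v i)
    (hC : ∀ i, Φᵀ *ᵥ ((chain W (k+1) L) *ᵥ (u i)) = 0)
    (hD : ∀ i, Φ *ᵥ ((chain W 1 (k-1))ᵀ *ᵥ (v i)) = 0)
    (u' v' : Fin m → (Fin (2*r + m) → ℝ))
    (hv' : ∀ i, v' i = u i)
    (hu' : ∀ i, u' i = (ε (k+1))⁻¹ • ((W (k+1)) *ᵥ (v' i))) :
    (∀ i j, u' i ⬝ᵥ u' j = if i = j then (1:ℝ) else 0) ∧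
    (∀ i,
      (W (k+1)) *ᵥ (v' i) = ε (k+1) • u' i ∧
      (W (k+1))ᵀ *ᵥ (u' i) = ε (k+1) • v' i ∧
      Φᵀ *ᵥ ((chain W (k+2) L) *ᵥ (u' i)) = 0 ∧
      Φ *ᵥ ((chain W 1 k)ᵀ *ᵥ (v' i)) = 0) :=
  statement6_general r m L Φ ε hε W hW0 k hk1 hkL u v hu hB hC hD u' v' hv' hu'
end
end

section
/- Let Φ be a d×d real matrix and suppose W_1,…,W_L are d×d real matrices that are block-decomposed by orthogonal matrices U_1,…,U_L, V_1,…,V_L with data W̃_1,…,W̃_L and ρ_1,…,ρ_L as in the context. Then for every l ∈ {1,…,L}: U_{l,1}ᵀ·[(W_L⋯W_{l+1})ᵀ·(W_L·W_{L−1}⋯W_1 − Φ)·(W_{l−1}⋯W_1)ᵀ]·V_{l,1} = (W̃_L⋯W̃_{l+1})ᵀ·(W̃_L·W̃_{L−1}⋯W̃_1 − U_{L,1}ᵀ·Φ·V_{1,1})·(W̃_{l−1}⋯W̃_1)ᵀ, where empty products of d×d matrices equal I_d and empty products of 2r×2r matrices equal I_{2r}. -/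
/-!
Since `V_lᵀ V_l = I`, a block-decomposed layer satisfies `W_l V_{l,1} = U_{l,1} W̃_l` and, dually,
`W_lᵀ U_{l,1} = V_{l,1} W̃_lᵀ`. As consecutive frames match (`V_{l+1} = U_l`), these relations
telescope along the partial products: `W_{j:i} V_{i,1} = U_{j,1} W̃_{j:i}` and
`W_{j:i}ᵀ U_{j,1} = V_{i,1} W̃_{j:i}ᵀ`. Substituting them into the conjugated gradient and using
`U_{L,1}ᵀ U_{L,1} = I` leaves exactly the gradient of the compressed factorization.
-/

open Matrix BigOperators Filter

noncomputable section

section Chain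

variable {n p : Type*} [Fintype n] [DecidableEq n] [Fintype p] [DecidableEq p]

theorem chainAux_mul_of_intertwine (A : ℕ → Matrix n n ℝ) (B : ℕ → Matrix p p ℝ)
    (F : ℕ → Matrix n p ℝ) (i : ℕ) :
    ∀ k, (∀ l, i ≤ l → l < i + k → A l * F l = F (l + 1) * B l) →
      chainAux A i k * F i = F (i + k) * chainAux B i k
  | 0, _ => by simp [chainAux]
  | k + 1, h => by
    rw [chainAux, chainAux, Matrix.mul_assoc,
      chainAux_mul_of_intertwine A B F i k fun l hil hlk => h l hil (by omega),
      ← Matrix.mul_assoc, h (i + k) (by omega) (by omega), Matrix.mul_assoc, ← Nat.add_assoc]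

theorem chain_mul_of_intertwine (A : ℕ → Matrix n n ℝ) (B : ℕ → Matrix p p ℝ)
    (F : ℕ → Matrix n p ℝ) {i j : ℕ} (hij : i ≤ j + 1)
    (h : ∀ l, i ≤ l → l ≤ j → A l * F l = F (l + 1) * B l) :
    chain A i j * F i = F (j + 1) * chain B i j := by
  have := chainAux_mul_of_intertwine A B F i (j + 1 - i) fun l hil hlk => h l hil (by omega)
  rwa [Nat.add_sub_cancel' hij] at this

end Chain

section Compression

variable {r m : ℕ}

theorem cols1_mul (M N : Matrix (Fin (2*r + m)) (Fin (2*r + m)) ℝ) :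
    cols1 r m (M * N) = M * cols1 r m N := by
  ext i j
  simp [cols1, Matrix.mul_apply]

theorem cols1_blockDiag (A : Matrix (Fin (2*r)) (Fin (2*r)) ℝ) (B : Matrix (Fin m) (Fin m) ℝ) :
    cols1 r m (blockDiag r m A B) = cols1 r m 1 * A := by
  ext i j
  refine Fin.addCases (fun i' => ?_) (fun i' => ?_) i
  · simp [cols1, _root_.blockDiag, Matrix.mul_apply, Matrix.one_apply]
  · simp only [cols1, _root_.blockDiag, reindex_apply, submatrix_apply,
      finSumFinEquiv_symm_apply_natAdd, finSumFinEquiv_symm_apply_castAdd, fromBlocks_apply₂₁,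
      Matrix.zero_apply, Matrix.mul_apply, Matrix.one_apply, ite_mul, one_mul, zero_mul]
    refine (Finset.sum_eq_zero fun k _ => if_neg ?_).symm
    simp only [Fin.ext_iff, Fin.val_natAdd, Fin.val_castAdd]
    omega

theorem transpose_blockDiag (A : Matrix (Fin (2*r)) (Fin (2*r)) ℝ) (B : Matrix (Fin m) (Fin m) ℝ) :
    (blockDiag r m A B)ᵀ = blockDiag r m Aᵀ Bᵀ := by
  simp [_root_.blockDiag, fromBlocks_transpose]

theorem transpose_cols1_mul_cols1 {U : Matrix (Fin (2*r + m)) (Fin (2*r + m)) ℝ}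
    (hU : Uᵀ * U = 1) : (cols1 r m U)ᵀ * cols1 r m U = 1 := by
  ext i j
  have := congrFun (congrFun hU (Fin.castAdd m i)) (Fin.castAdd m j)
  simpa [cols1, Matrix.mul_apply, Matrix.one_apply] using this

variable {U V W : Matrix (Fin (2*r + m)) (Fin (2*r + m)) ℝ}
  {A : Matrix (Fin (2*r)) (Fin (2*r)) ℝ} {B : Matrix (Fin m) (Fin m) ℝ}

theorem mul_cols1_of_eq_blockDiag (hW : W = U * blockDiag r m A B * Vᵀ) (hV : Vᵀ * V = 1) :
    W * cols1 r m V = cols1 r m U * A := by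
  rw [hW, ← cols1_mul, Matrix.mul_assoc, hV, Matrix.mul_one, cols1_mul, cols1_blockDiag,
    ← Matrix.mul_assoc, ← cols1_mul, Matrix.mul_one]

theorem transpose_mul_cols1_of_eq_blockDiag (hW : W = U * blockDiag r m A B * Vᵀ)
    (hU : Uᵀ * U = 1) : Wᵀ * cols1 r m U = cols1 r m V * Aᵀ := by
  have hWt : Wᵀ = V * blockDiag r m Aᵀ Bᵀ * Uᵀ := by
    rw [hW, Matrix.transpose_mul, Matrix.transpose_mul, transpose_blockDiag,
      Matrix.transpose_transpose, Matrix.mul_assoc]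
  exact mul_cols1_of_eq_blockDiag hWt hU

end Compression

section Frames

variable {r m L : ℕ} {U V W : ℕ → Matrix (Fin (2*r + m)) (Fin (2*r + m)) ℝ}
  {Wtil : ℕ → Matrix (Fin (2*r)) (Fin (2*r)) ℝ} {ρ : ℕ → ℝ}

/-- The frame entering layer `k`: it is `V k` for `1 ≤ k ≤ L` and `U L` for `k = L + 1`. -/
def inputFrame (U V : ℕ → Matrix (Fin (2*r + m)) (Fin (2*r + m)) ℝ) (k : ℕ) :
    Matrix (Fin (2*r + m)) (Fin (2*r + m)) ℝ :=
  if k ≤ 1 then V 1 else U (k - 1)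

theorem inputFrame_succ {k : ℕ} (hk : 1 ≤ k) : inputFrame U V (k + 1) = U k := by
  simp [inputFrame]
  omega

theorem inputFrame_eq (hUV : ∀ l, 1 ≤ l → l + 1 ≤ L → V (l+1) = U l) {k : ℕ} (hk : 1 ≤ k)
    (hkL : k ≤ L) : inputFrame U V k = V k := by
  rcases Nat.lt_or_ge k 2 with hk2 | hk2
  · simp [inputFrame, show k = 1 by omega]
  · rw [← Nat.sub_add_cancel hk, inputFrame_succ (by omega), hUV (k - 1) (by omega) (by omega)]

theorem chain_mul_cols1_inputFrame
    (hV : ∀ l, 1 ≤ l → l ≤ L → (V l)ᵀ * V l = 1 ∧ V l * (V l)ᵀ = 1)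
    (hUV : ∀ l, 1 ≤ l → l + 1 ≤ L → V (l+1) = U l)
    (hW : ∀ l, 1 ≤ l → l ≤ L → W l = U l * blockDiag r m (Wtil l) (ρ l • 1) * (V l)ᵀ)
    {i j : ℕ} (hi : 1 ≤ i) (hij : i ≤ j + 1) (hjL : j ≤ L) :
    chain W i j * cols1 r m (inputFrame U V i)
      = cols1 r m (inputFrame U V (j + 1)) * chain Wtil i j := by
  refine chain_mul_of_intertwine W Wtil (fun k => cols1 r m (inputFrame U V k)) hij fun k hik hkj => ?_
  rw [inputFrame_eq hUV (by omega) (by omega), inputFrame_succ (by omega)]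
  exact mul_cols1_of_eq_blockDiag (hW k (by omega) (by omega)) (hV k (by omega) (by omega)).1

theorem chain_transpose_mul_cols1_inputFrame
    (hU : ∀ l, 1 ≤ l → l ≤ L → (U l)ᵀ * U l = 1 ∧ U l * (U l)ᵀ = 1)
    (hUV : ∀ l, 1 ≤ l → l + 1 ≤ L → V (l+1) = U l)
    (hW : ∀ l, 1 ≤ l → l ≤ L → W l = U l * blockDiag r m (Wtil l) (ρ l • 1) * (V l)ᵀ)
    {i j : ℕ} (hi : 1 ≤ i) (hij : i ≤ j + 1) (hjL : j ≤ L) :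
    (chain W i j)ᵀ * cols1 r m (inputFrame U V (j + 1))
      = cols1 r m (inputFrame U V i) * (chain Wtil i j)ᵀ := by
  suffices h : chain Wtil i j * (cols1 r m (inputFrame U V i))ᵀ
      = (cols1 r m (inputFrame U V (j + 1)))ᵀ * chain W i j by
    simpa only [Matrix.transpose_mul, Matrix.transpose_transpose] using
      (congrArg Matrix.transpose h).symm
  refine chain_mul_of_intertwine Wtil W (fun k => (cols1 r m (inputFrame U V k))ᵀ) hij
    fun k hik hkj => ?_
  rw [inputFrame_eq hUV (by omega) (by omega), inputFrame_succ (by omega),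
    ← Matrix.transpose_transpose (Wtil k), ← Matrix.transpose_mul,
    ← transpose_mul_cols1_of_eq_blockDiag (hW k (by omega) (by omega)) (hU k (by omega) (by omega)).1,
    Matrix.transpose_mul, Matrix.transpose_transpose]

end Frames

theorem statement10_general
    (r m : ℕ) (L : ℕ)
    (Φ : Matrix (Fin (2*r + m)) (Fin (2*r + m)) ℝ)
    (U V : ℕ → Matrix (Fin (2*r + m)) (Fin (2*r + m)) ℝ)
    (hU : ∀ l, 1 ≤ l → l ≤ L → (U l)ᵀ * U l = 1 ∧ U l * (U l)ᵀ = 1)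
    (hV : ∀ l, 1 ≤ l → l ≤ L → (V l)ᵀ * V l = 1 ∧ V l * (V l)ᵀ = 1)
    (hUV : ∀ l, 1 ≤ l → l + 1 ≤ L → V (l+1) = U l)
    (W : ℕ → Matrix (Fin (2*r + m)) (Fin (2*r + m)) ℝ)
    (Wtil : ℕ → Matrix (Fin (2*r)) (Fin (2*r)) ℝ) (ρ : ℕ → ℝ)
    (hW : ∀ l, 1 ≤ l → l ≤ L → W l = U l * blockDiag r m (Wtil l) (ρ l • 1) * (V l)ᵀ) :
    ∀ l, 1 ≤ l → l ≤ L →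
      (cols1 r m (U l))ᵀ
          * ((chain W (l+1) L)ᵀ * (chain W 1 L - Φ) * (chain W 1 (l-1))ᵀ)
          * cols1 r m (V l)
        = (chain Wtil (l+1) L)ᵀ
          * (chain Wtil 1 L - (cols1 r m (U L))ᵀ * Φ * cols1 r m (V 1))
          * (chain Wtil 1 (l-1))ᵀ := by
  intro l hl hlL
  have hleft := chain_mul_cols1_inputFrame hV hUV hW (i := l + 1) (j := L) (by omega) (by omega) le_rfl
  have hmid := chain_mul_cols1_inputFrame hV hUV hW (i := 1) (j := L) le_rfl (by omega) le_rfl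
  have hright := chain_transpose_mul_cols1_inputFrame hU hUV hW (i := 1) (j := l - 1) le_rfl
    (by omega) (by omega)
  rw [inputFrame_succ hl, inputFrame_succ (by omega)] at hleft
  rw [inputFrame_eq hUV le_rfl (by omega), inputFrame_succ (by omega)] at hmid
  rw [inputFrame_eq hUV le_rfl (by omega), Nat.sub_add_cancel hl, inputFrame_eq hUV hl hlL] at hright
  have hleftT : (cols1 r m (U l))ᵀ * (chain W (l+1) L)ᵀ
      = (chain Wtil (l+1) L)ᵀ * (cols1 r m (U L))ᵀ := by
    simpa only [Matrix.transpose_mul] using congrArg Matrix.transpose hleft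
  have hcompress : (cols1 r m (U L))ᵀ * chain W 1 L * cols1 r m (V 1) = chain Wtil 1 L := by
    rw [Matrix.mul_assoc, hmid, ← Matrix.mul_assoc,
      transpose_cols1_mul_cols1 (hU L (by omega) le_rfl).1, Matrix.one_mul]
  calc _ = ((cols1 r m (U l))ᵀ * (chain W (l+1) L)ᵀ) * (chain W 1 L - Φ)
          * ((chain W 1 (l-1))ᵀ * cols1 r m (V l)) := by
        simp only [Matrix.mul_assoc]
    _ = (chain Wtil (l+1) L)ᵀ * ((cols1 r m (U L))ᵀ * (chain W 1 L - Φ) * cols1 r m (V 1))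
          * (chain Wtil 1 (l-1))ᵀ := by
        rw [hleftT, hright]
        simp only [Matrix.mul_assoc]
    _ = _ := by rw [Matrix.mul_sub, Matrix.sub_mul, hcompress]

/-- compression of the gradient. For a block-decomposed family,
conjugating the gradient `W_{L:l+1}ᵀ·(W_{L:1} − Φ)·W_{l−1:1}ᵀ` by `U_{l,1}, V_{l,1}`
gives the gradient of the compressed factorization with target `U_{L,1}ᵀ·Φ·V_{1,1}`. -/
theorem statement10
    (r m : ℕ) (hm : 0 < m) (L : ℕ) (hL : 1 ≤ L)
    (Φ : Matrix (Fin (2*r + m)) (Fin (2*r + m)) ℝ)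
    (U V : ℕ → Matrix (Fin (2*r + m)) (Fin (2*r + m)) ℝ)
    (hU : ∀ l, 1 ≤ l → l ≤ L → (U l)ᵀ * U l = 1 ∧ U l * (U l)ᵀ = 1)
    (hV : ∀ l, 1 ≤ l → l ≤ L → (V l)ᵀ * V l = 1 ∧ V l * (V l)ᵀ = 1)
    (hUV : ∀ l, 1 ≤ l → l + 1 ≤ L → V (l+1) = U l)
    (W : ℕ → Matrix (Fin (2*r + m)) (Fin (2*r + m)) ℝ)
    (Wtil : ℕ → Matrix (Fin (2*r)) (Fin (2*r)) ℝ) (ρ : ℕ → ℝ)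
    (hW : ∀ l, 1 ≤ l → l ≤ L → W l = U l * blockDiag r m (Wtil l) (ρ l • 1) * (V l)ᵀ) :
    ∀ l, 1 ≤ l → l ≤ L →
      (cols1 r m (U l))ᵀ
          * ((chain W (l+1) L)ᵀ * (chain W 1 L - Φ) * (chain W 1 (l-1))ᵀ)
          * cols1 r m (V l)
        = (chain Wtil (l+1) L)ᵀ
          * (chain Wtil 1 L - (cols1 r m (U L))ᵀ * Φ * cols1 r m (V 1))
          * (chain Wtil 1 (l-1))ᵀ :=
  statement10_general r m L Φ U V hU hV hUV W Wtil ρ hW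
end
end
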